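/- Let d, q > 0 and r₁, r₂, r₃ ≥ 0 with r₁ < r₂. Let A be the 3×3 matrix with rows [−d−q+r₁, 0, d], [0, −d−q+r₂, d], [d+q, d+q, −2d+r₃], and B the 2×2 matrix with rows [−d−q+r₂, 2d], [d+q, −2d+r₃]. Then s(A) < s(B). -/

import Mathlib

/-!
Put `K = d(d+q)` and let `ρ, a, c` be the diagonal entries of `A`, so that `a - ρ = r₂ - r₁ > 0`.
The larger root `l > a` of `(λ - a)(λ - c) = 2K` is an eigenvalue of `B`. Every eigenvalue `μ`
of `A` satisfies `K/(μ - ρ) + K/(μ - a) = μ - c`. If `Re μ ≥ l`, then since `Re w⁻¹ ≤ (Re w)⁻¹`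
and `ρ < a`, taking real parts gives `(Re μ - a)(Re μ - c) < 2K`, whereas `λ ↦ (λ - a)(λ - c)`
is increasing on `[l, ∞)` and equals `2K` at `l`.
-/

open Matrix

/-- Spectral bound: maximum real part of the (complex) eigenvalues. -/
noncomputable def specBound {n : ℕ} (M : Matrix (Fin n) (Fin n) ℝ) : ℝ :=
  sSup {t : ℝ | ∃ μ ∈ spectrum ℂ (M.map Complex.ofReal), μ.re = t}

section SpecBound

variable {n : ℕ} (M : Matrix (Fin n) (Fin n) ℝ)

lemma mem_spectrum_map_ofReal_iff (μ : ℂ) :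
    μ ∈ spectrum ℂ (M.map Complex.ofReal) ↔
      (scalar (Fin n) μ - M.map Complex.ofReal).det = 0 := by
  rw [mem_spectrum_iff_isRoot_charpoly, Polynomial.IsRoot, eval_charpoly]

lemma finite_re_spectrum :
    {t : ℝ | ∃ μ ∈ spectrum ℂ (M.map Complex.ofReal), μ.re = t}.Finite := by
  simpa only [Set.image, exists_prop] using
    (M.map Complex.ofReal).finite_spectrum.image Complex.re

lemma re_le_specBound {μ : ℂ} (hμ : μ ∈ spectrum ℂ (M.map Complex.ofReal)) :
    μ.re ≤ specBound M :=
  le_csSup (finite_re_spectrum M).bddAbove ⟨μ, hμ, rfl⟩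

lemma specBound_lt_of_forall_re_lt [NeZero n] {t : ℝ}
    (h : ∀ μ ∈ spectrum ℂ (M.map Complex.ofReal), μ.re < t) : specBound M < t := by
  obtain ⟨μ, hμ⟩ :=
    spectrum.nonempty_of_isAlgClosed_of_finiteDimensional ℂ (M.map Complex.ofReal)
  rw [specBound, (finite_re_spectrum M).csSup_lt_iff ⟨μ.re, μ, hμ, rfl⟩]
  rintro _ ⟨ν, hν, rfl⟩
  exact h ν hν

end SpecBound

lemma Complex.re_inv_le_inv_re {w : ℂ} (hw : 0 < w.re) : w⁻¹.re ≤ w.re⁻¹ := by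
  have hsq : w.re * w.re ≤ normSq w := by
    rw [normSq_apply]; nlinarith [mul_self_nonneg w.im]
  rw [inv_re, div_le_iff₀ (by nlinarith), inv_mul_eq_div, le_div_iff₀ hw]
  exact hsq

lemma exists_gt_mul_sub_eq (a c : ℝ) {k : ℝ} (hk : 0 < k) :
    ∃ l, a < l ∧ (l - a) * (l - c) = k := by
  have hs := Real.sq_sqrt (by positivity : 0 ≤ (a - c) ^ 2 + 4 * k)
  refine ⟨(a + c + √((a - c) ^ 2 + 4 * k)) / 2, ?_, by linear_combination hs / 4⟩
  nlinarith [Real.sqrt_nonneg ((a - c) ^ 2 + 4 * k)]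

lemma re_lt_of_cubic_eq_zero {ρ a c K l : ℝ} (hK : 0 < K) (hρa : ρ < a) (hal : a < l)
    (hl : (l - a) * (l - c) = 2 * K) {μ : ℂ}
    (hμ : (μ - ρ) * ((μ - a) * (μ - c) - 2 * K) + K * (a - ρ) = 0) : μ.re < l := by
  by_contra! hle
  have h₁ : 0 < (μ - ρ).re := by simp only [Complex.sub_re, Complex.ofReal_re]; linarith
  have h₂ : 0 < (μ - a).re := by simp only [Complex.sub_re, Complex.ofReal_re]; linarith
  have hres : K * (μ - ρ)⁻¹ + K * (μ - a)⁻¹ = μ - c := by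
    have : μ - ρ ≠ 0 := fun h => by simp [h] at h₁
    have : μ - a ≠ 0 := fun h => by simp [h] at h₂
    field_simp
    linear_combination -hμ
  have hre := congrArg Complex.re hres
  have i₁ := Complex.re_inv_le_inv_re h₁
  have i₂ := Complex.re_inv_le_inv_re h₂
  simp only [Complex.add_re, Complex.sub_re, Complex.re_ofReal_mul, Complex.ofReal_re]
    at hre i₁ i₂
  set x := μ.re
  have hρ_inv : (x - ρ)⁻¹ < (x - a)⁻¹ := by gcongr
  have hlt : x - c < 2 * K * (x - a)⁻¹ := by nlinarith
  have hlc : c < l := by nlinarith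
  have hgrow : (l - a) * (l - c) ≤ (x - a) * (x - c) := by gcongr
  have : (x - a) * (x - c) < 2 * K := by
    calc (x - a) * (x - c) < (x - a) * (2 * K * (x - a)⁻¹) := by gcongr
      _ = 2 * K := by field_simp [(by linarith : x - a ≠ 0)]
  linarith

theorem specBound_tributary_lt_general (d q r₁ r₂ r₃ : ℝ) (hd : 0 < d) (hq : 0 < q)
    (hlt : r₁ < r₂) :
    specBound !![-d - q + r₁, 0, d;
                   0, -d - q + r₂, d;
                   d + q, d + q, -2 * d + r₃] <
      specBound !![-d - q + r₂, 2 * d; d + q, -2 * d + r₃] := by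
  have hK : 0 < d * (d + q) := by positivity
  obtain ⟨l, hal, hl⟩ :=
    exists_gt_mul_sub_eq (-d - q + r₂) (-2 * d + r₃) (by positivity : 0 < 2 * (d * (d + q)))
  calc _ < l := by
        refine specBound_lt_of_forall_re_lt _ fun μ hμ =>
          re_lt_of_cubic_eq_zero (ρ := -d - q + r₁) hK (by linarith) hal hl ?_
        rw [mem_spectrum_map_ofReal_iff, det_fin_three] at hμ
        simp only [Matrix.sub_apply, scalar_apply, diagonal_apply, map_apply, of_apply, cons_val',
          cons_val, cons_val_fin_one, Fin.reduceEq, if_true, if_false] at hμ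
        push_cast at hμ ⊢
        linear_combination hμ
    _ ≤ _ := by
        refine Complex.ofReal_re l ▸ re_le_specBound _ ?_
        rw [mem_spectrum_map_ofReal_iff, det_fin_two]
        simp only [Matrix.sub_apply, scalar_apply, diagonal_apply, map_apply, of_apply, cons_val',
          cons_val, cons_val_fin_one, Fin.reduceEq, if_true, if_false]
        push_cast
        linear_combination (by exact_mod_cast hl : ((l - (-d - q + r₂)) * (l - (-2 * d + r₃)) : ℂ)
          = 2 * (d * (d + q)))

/-- Comparison of spectral bounds of the tributary matrix A
and its limiting matrix B. -/
theorem specBound_tributary_lt (d q r₁ r₂ r₃ : ℝ) (hd : 0 < d) (hq : 0 < q)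
    (hr₁ : 0 ≤ r₁) (hr₂ : 0 ≤ r₂) (hr₃ : 0 ≤ r₃) (hlt : r₁ < r₂) :
    specBound !![-d - q + r₁, 0, d;
                   0, -d - q + r₂, d;
                   d + q, d + q, -2 * d + r₃] <
      specBound !![-d - q + r₂, 2 * d; d + q, -2 * d + r₃] :=
  specBound_tributary_lt_general d q r₁ r₂ r₃ hd hq hlt
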